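/- The bulk equation H3 with δ=1, Q(u00,u10,u01,u11;a,b) = a(u00·u10 + u01·u11) − b(u00·u01 + u10·u11) + a² − b², together with the boundary equation q(x,y,z;a) = a² + a y(x+z) + μ and the parameter map σ(a) = μ/a (where μ is a fixed nonzero complex parameter and all occurring parameters a, b are nonzero), satisfies the 3D boundary consistency condition. -/

import Mathlib

/-!
Write `a' = σ(a)`, `b' = σ(b)`, so that `a a' = b b' = μ` and each boundary equation reads
`y (x + z) + (a + a') = 0`. Eliminating `y1` and `y3` from the equation for `z1`, its coefficient
and its constant term acquire the common factor `a (x x2 + b)`; after cancelling it the equation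
becomes `z1 r = x2 s` with `r = (a + a') x2 - (b + b') x1` and `s = (b + b') x2 - (a + a') x1`,
free of `x`. Symmetrically `z2 r = x1 s`. Both boundary equations then give the same `w`,
namely `(w - x) s = (b + b')² - (a + a')²`, and this `w` also solves the top bulk equation for `w3`.
-/

/-- The bulk quad-graph equation. -/
noncomputable def Qbulk (u00 u10 u01 u11 a b : ℂ) : ℂ :=
  a * (u00 * u10 + u01 * u11) - b * (u00 * u01 + u10 * u11) + a ^ 2 - b ^ 2

/-- The boundary equation. -/
noncomputable def qBdry (mu : ℂ) (x y z a : ℂ) : ℂ :=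
  a ^ 2 + a * y * (x + z) + mu

/-- The parameter map acting on edge labels. -/
noncomputable def sigmaMap (mu : ℂ) (a : ℂ) : ℂ :=
  mu / a

section Bulk

variable (u00 u10 u01 u11 v a b : ℂ)

theorem Qbulk_swap : Qbulk u00 u01 u10 u11 b a = -Qbulk u00 u10 u01 u11 a b := by
  unfold Qbulk; ring

theorem Qbulk_sub_Qbulk_u00 :
    Qbulk u00 u10 u01 u11 a b - Qbulk v u10 u01 u11 a b = (u00 - v) * (a * u10 - b * u01) := by
  unfold Qbulk; ring

theorem Qbulk_sub_Qbulk_u10 :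
    Qbulk u00 u10 u01 u11 a b - Qbulk u00 v u01 u11 a b = (u10 - v) * (a * u00 - b * u11) := by
  unfold Qbulk; ring

theorem Qbulk_sub_Qbulk_u11 :
    Qbulk u00 u10 u01 u11 a b - Qbulk u00 u10 u01 v a b = (u11 - v) * (a * u01 - b * u10) := by
  unfold Qbulk; ring

variable {u00 u10 u01 u11 v a b}

theorem eq_of_Qbulk_eq_zero (h : Qbulk u00 u10 u01 u11 a b = 0) (h' : Qbulk u00 u10 u01 v a b = 0)
    (hc : a * u01 - b * u10 ≠ 0) : u11 = v := by
  have key := Qbulk_sub_Qbulk_u11 u00 u10 u01 u11 v a b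
  rw [h, h', sub_zero, eq_comm, mul_eq_zero] at key
  exact sub_eq_zero.1 (key.resolve_right hc)

end Bulk

section Boundary

variable {mu a : ℂ} (x y z z' : ℂ)

theorem mul_sigmaMap (ha : a ≠ 0) : a * sigmaMap mu a = mu :=
  mul_div_cancel₀ mu ha

theorem qBdry_sub_qBdry : qBdry mu x y z a - qBdry mu x y z' a = (z - z') * (a * y) := by
  unfold qBdry; ring

variable {x y z} in
theorem qBdry_eq_zero_iff (ha : a ≠ 0) :
    qBdry mu x y z a = 0 ↔ y * (x + z) + (a + sigmaMap mu a) = 0 := by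
  have h : qBdry mu x y z a = a * (y * (x + z) + (a + sigmaMap mu a)) := by
    unfold qBdry; linear_combination -mul_sigmaMap (mu := mu) ha
  rw [h, mul_eq_zero, or_iff_right ha]

end Boundary

section Elimination

variable {a a' b b' x x1 x2 y1 y2 y3 z1 z2 w : ℂ}

theorem corner_eq (hab : a * a' = b * b') (hx2 : x2 ≠ 0) (hD : a * x2 - b * x1 ≠ 0)
    (h1 : Qbulk y1 x2 x1 x a b = 0) (h3 : x2 * (x + y3) + (b + b') = 0)
    (h4 : Qbulk y1 z1 x2 y3 b' a = 0) (hc : b' * y1 - a * y3 ≠ 0) :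
    (a + a') * x2 - (b + b') * x1 ≠ 0 ∧
      z1 * ((a + a') * x2 - (b + b') * x1) = x2 * ((b + b') * x2 - (a + a') * x1) := by
  unfold Qbulk at h1 h4
  have hcoeff : x2 * (a * x2 - b * x1) * (b' * y1 - a * y3) =
      a * (x * x2 + b) * ((a + a') * x2 - (b + b') * x1) := by
    linear_combination b' * x2 * h1 - a * (a * x2 - b * x1) * h3 - x2 * (b + x2 * x) * hab
  have hsolve : x2 * (a * x2 - b * x1) * (b' * y1 - a * y3) * z1 =
      a * (x * x2 + b) * (x2 * ((b + b') * x2 - (a + a') * x1)) := by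
    linear_combination x2 * (a * x2 - b * x1) * h4 + a * x2 * x2 * h1
      - b' * x2 * (a * x2 - b * x1) * h3 + x2 * x1 * (b + x2 * x) * hab
  have hne : a * (x * x2 + b) * ((a + a') * x2 - (b + b') * x1) ≠ 0 :=
    hcoeff ▸ mul_ne_zero (mul_ne_zero hx2 hD) hc
  refine ⟨right_ne_zero_of_mul hne, mul_left_cancel₀ (left_ne_zero_of_mul hne) ?_⟩
  linear_combination hsolve - z1 * hcoeff

theorem boundary_solution {α β : ℂ} (hx1 : x1 ≠ 0) (hz2 : z2 ≠ 0)
    (h2 : x1 * (x + y2) + α = 0) (h6 : z2 * (y2 + w) + β = 0)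
    (hz : z2 * (α * x2 - β * x1) = x1 * (β * x2 - α * x1)) :
    (w - x) * (β * x2 - α * x1) = β ^ 2 - α ^ 2 := by
  refine mul_left_cancel₀ (mul_ne_zero hx1 hz2) ?_
  linear_combination x1 * (β * x2 - α * x1) * h6 - z2 * (β * x2 - α * x1) * h2 + β * hz

theorem Qbulk_top_eq_zero (hab : a * a' = b * b') (hD : a * x2 - b * x1 ≠ 0)
    (hr : (a + a') * x2 - (b + b') * x1 ≠ 0) (h1 : Qbulk y1 x2 x1 x a b = 0)
    (hz1 : z1 * ((a + a') * x2 - (b + b') * x1) = x2 * ((b + b') * x2 - (a + a') * x1))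
    (hz2 : z2 * ((a + a') * x2 - (b + b') * x1) = x1 * ((b + b') * x2 - (a + a') * x1))
    (hw : (w - x) * ((b + b') * x2 - (a + a') * x1) = (b + b') ^ 2 - (a + a') ^ 2) :
    Qbulk y1 z1 z2 w b' a' = 0 := by
  refine (mul_eq_zero.1 ?_).resolve_left (mul_ne_zero hr hD)
  unfold Qbulk at h1 ⊢
  linear_combination ((b + b') * x2 - (a + a') * x1) * (b' * x2 - a' * x1) * h1
    + (a * x2 - b * x1) * y1 * (b' * hz1 - a' * hz2)
    + (a * x2 - b * x1) * w * (b' * hz2 - a' * hz1)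
    + (a * x2 - b * x1) * (b' * x1 - a' * x2) * hw
    + (x2 ^ 2 - x1 ^ 2) * (x * ((a + a') * x1 - (b + b') * x2) + a ^ 2 - b ^ 2 + a * a' - b * b')
      * hab

end Elimination

theorem boundary_consistency_stmt_11_general
    (mu : ℂ) (a b : ℂ) (ha : a ≠ 0) (hb : b ≠ 0)
    (x x1 x2 y1 y2 y3 z1 z2 w1 w2 w3 : ℂ)
    -- the eight equations of the scheme
    (e1 : Qbulk y1 x2 x1 x a b = 0)
    (e2 : qBdry mu x x1 y2 a = 0)
    (e3 : qBdry mu x x2 y3 b = 0)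
    (e4 : Qbulk y1 z1 x2 y3 (sigmaMap mu b) a = 0)
    (e5 : Qbulk y1 z2 x1 y2 (sigmaMap mu a) b = 0)
    (e6 : qBdry mu y2 z2 w1 b = 0)
    (e7 : qBdry mu y3 z1 w2 a = 0)
    (e8 : Qbulk y1 z1 z2 w3 (sigmaMap mu b) (sigmaMap mu a) = 0)
    -- nonvanishing of the coefficient of the determined variable in each
    -- affine-linear equation (coefficient = value at 1 minus value at 0)
    (c1 : Qbulk 1 x2 x1 x a b - Qbulk 0 x2 x1 x a b ≠ 0)
    (c2 : qBdry mu x x1 1 a - qBdry mu x x1 0 a ≠ 0)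
    (c3 : qBdry mu x x2 1 b - qBdry mu x x2 0 b ≠ 0)
    (c4 : Qbulk y1 1 x2 y3 (sigmaMap mu b) a - Qbulk y1 0 x2 y3 (sigmaMap mu b) a ≠ 0)
    (c5 : Qbulk y1 1 x1 y2 (sigmaMap mu a) b - Qbulk y1 0 x1 y2 (sigmaMap mu a) b ≠ 0)
    (c6 : qBdry mu y2 z2 1 b - qBdry mu y2 z2 0 b ≠ 0)
    (c7 : qBdry mu y3 z1 1 a - qBdry mu y3 z1 0 a ≠ 0)
    (c8 : Qbulk y1 z1 z2 1 (sigmaMap mu b) (sigmaMap mu a) - Qbulk y1 z1 z2 0 (sigmaMap mu b) (sigmaMap mu a) ≠ 0) :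
    w1 = w2 ∧ w2 = w3 := by
  simp only [Qbulk_sub_Qbulk_u00, Qbulk_sub_Qbulk_u10, Qbulk_sub_Qbulk_u11, qBdry_sub_qBdry,
    sub_zero, one_mul] at c1 c2 c3 c4 c5 c6 c7 c8
  rw [qBdry_eq_zero_iff ha] at e2 e7
  rw [qBdry_eq_zero_iff hb] at e3 e6
  have hab : a * sigmaMap mu a = b * sigmaMap mu b := by rw [mul_sigmaMap ha, mul_sigmaMap hb]
  obtain ⟨hr, hz1⟩ := corner_eq hab (right_ne_zero_of_mul c3) c1 e1 e3 e4 c4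
  obtain ⟨-, hz2⟩ := corner_eq hab.symm (right_ne_zero_of_mul c2)
    (sub_ne_zero.2 (sub_ne_zero.1 c1).symm) (by rw [Qbulk_swap, e1, neg_zero]) e2 e5 c5
  have hw1 := boundary_solution (x2 := x2) (right_ne_zero_of_mul c2) (right_ne_zero_of_mul c6)
    e2 e6 (by linear_combination -hz2)
  have hw2 := boundary_solution (x2 := x1) (right_ne_zero_of_mul c3) (right_ne_zero_of_mul c7)
    e3 e7 (by linear_combination -hz1)
  have hs : (b + sigmaMap mu b) * x2 - (a + sigmaMap mu a) * x1 ≠ 0 := by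
    rintro hs
    rw [hs, mul_zero] at hz1
    exact mul_ne_zero (right_ne_zero_of_mul c7) hr hz1
  have hw12 : w1 = w2 := mul_right_cancel₀ hs (by linear_combination hw1 + hw2)
  have htop : Qbulk y1 z1 z2 w1 (sigmaMap mu b) (sigmaMap mu a) = 0 :=
    Qbulk_top_eq_zero hab c1 hr e1 hz1 (by linear_combination -hz2) hw1
  exact ⟨hw12, hw12 ▸ eq_of_Qbulk_eq_zero htop e8 c8⟩

/-- 3D boundary consistency of the triple (Q, q, σ). -/
theorem boundary_consistency_stmt_11
    (mu : ℂ) (a b : ℂ) (hμ : mu ≠ 0) (ha : a ≠ 0) (hb : b ≠ 0)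
    (x x1 x2 y1 y2 y3 z1 z2 w1 w2 w3 : ℂ)
    -- the eight equations of the scheme
    (e1 : Qbulk y1 x2 x1 x a b = 0)
    (e2 : qBdry mu x x1 y2 a = 0)
    (e3 : qBdry mu x x2 y3 b = 0)
    (e4 : Qbulk y1 z1 x2 y3 (sigmaMap mu b) a = 0)
    (e5 : Qbulk y1 z2 x1 y2 (sigmaMap mu a) b = 0)
    (e6 : qBdry mu y2 z2 w1 b = 0)
    (e7 : qBdry mu y3 z1 w2 a = 0)
    (e8 : Qbulk y1 z1 z2 w3 (sigmaMap mu b) (sigmaMap mu a) = 0)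
    -- nonvanishing of the coefficient of the determined variable in each
    -- affine-linear equation (coefficient = value at 1 minus value at 0)
    (c1 : Qbulk 1 x2 x1 x a b - Qbulk 0 x2 x1 x a b ≠ 0)
    (c2 : qBdry mu x x1 1 a - qBdry mu x x1 0 a ≠ 0)
    (c3 : qBdry mu x x2 1 b - qBdry mu x x2 0 b ≠ 0)
    (c4 : Qbulk y1 1 x2 y3 (sigmaMap mu b) a - Qbulk y1 0 x2 y3 (sigmaMap mu b) a ≠ 0)
    (c5 : Qbulk y1 1 x1 y2 (sigmaMap mu a) b - Qbulk y1 0 x1 y2 (sigmaMap mu a) b ≠ 0)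
    (c6 : qBdry mu y2 z2 1 b - qBdry mu y2 z2 0 b ≠ 0)
    (c7 : qBdry mu y3 z1 1 a - qBdry mu y3 z1 0 a ≠ 0)
    (c8 : Qbulk y1 z1 z2 1 (sigmaMap mu b) (sigmaMap mu a) - Qbulk y1 z1 z2 0 (sigmaMap mu b) (sigmaMap mu a) ≠ 0) :
    w1 = w2 ∧ w2 = w3 :=
  boundary_consistency_stmt_11_general mu a b ha hb x x1 x2 y1 y2 y3 z1 z2 w1 w2 w3 e1 e2 e3 e4 e5
    e6 e7 e8 c1 c2 c3 c4 c5 c6 c7 c8
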